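/- arXiv:1706.06199 — 2 statements merged into one kernel-verified Lean document; each statement's English description precedes it below -/
import Mathlib

section
/- Under the hypotheses that p₂·p₁' − p₂'·p₁ = p₀·p₂ with p₂ nowhere zero, any solution y of p₂(t)y''' + α·p₂(t)y'' + p₁(t)y' + p₀(t)y = h(t) on an interval satisfies the first integral y''(t) + α·y'(t) + (p₁(t)/p₂(t))·y(t) = H(t) + c for some constant c, where H is any antiderivative of h/p₂ on the interval. -/
lemma const_on_Ioo {a b : ℝ} {f : ℝ → ℝ}
    (hf : ∀ t ∈ Set.Ioo a b, HasDerivAt f 0 t)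
    {x y : ℝ} (hx : x ∈ Set.Ioo a b) (hy : y ∈ Set.Ioo a b) : f x = f y := by
  apply (convex_Ioo a b).is_const_of_fderivWithin_eq_zero
    (fun t ht => ((hf t ht).differentiableAt).differentiableWithinAt) _ hx hy
  intro t ht
  rw [fderivWithin_of_isOpen isOpen_Ioo ht, (hf t ht).hasFDerivAt.fderiv]
  ext
  simp

theorem stmt_3 (α : ℝ) (p₀ p₁ p₂ h y H : ℝ → ℝ) (a b : ℝ)
    (hcont₀ : ContinuousOn p₀ (Set.Ioo a b)) (hcont₁ : ContinuousOn p₁ (Set.Ioo a b))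
    (hcont₂ : ContinuousOn p₂ (Set.Ioo a b)) (hconth : ContinuousOn h (Set.Ioo a b))
    (hp₂ne : ∀ t ∈ Set.Ioo a b, p₂ t ≠ 0)
    (hp₁ : ∀ t ∈ Set.Ioo a b, DifferentiableAt ℝ p₁ t)
    (hp₂ : ∀ t ∈ Set.Ioo a b, DifferentiableAt ℝ p₂ t)
    (hcond : ∀ t ∈ Set.Ioo a b,
      p₂ t * deriv p₁ t - deriv p₂ t * p₁ t = p₀ t * p₂ t)
    (hH : ∀ t ∈ Set.Ioo a b, HasDerivAt H (h t / p₂ t) t)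
    (hy : ∀ t ∈ Set.Ioo a b, DifferentiableAt ℝ y t)
    (hy' : ∀ t ∈ Set.Ioo a b, DifferentiableAt ℝ (deriv y) t)
    (hy'' : ∀ t ∈ Set.Ioo a b, DifferentiableAt ℝ (deriv (deriv y)) t)
    (hode : ∀ t ∈ Set.Ioo a b,
      p₂ t * deriv (deriv (deriv y)) t + α * p₂ t * deriv (deriv y) t
        + p₁ t * deriv y t + p₀ t * y t = h t) :
    ∃ c : ℝ, ∀ t ∈ Set.Ioo a b,
      deriv (deriv y) t + α * deriv y t + (p₁ t / p₂ t) * y t = H t + c := by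
  set F : ℝ → ℝ := fun t => deriv (deriv y) t + α * deriv y t + (p₁ t / p₂ t) * y t - H t
    with hF
  have hderiv : ∀ t ∈ Set.Ioo a b, HasDerivAt F 0 t := by
    intro t ht
    have h1 : HasDerivAt (deriv (deriv y)) (deriv (deriv (deriv y)) t) t :=
      (hy'' t ht).hasDerivAt
    have h2 : HasDerivAt (fun s => α * deriv y s) (α * deriv (deriv y) t) t :=
      ((hy' t ht).hasDerivAt).const_mul α
    have h3 : HasDerivAt (fun s => p₁ s / p₂ s * y s)
        ((deriv p₁ t * p₂ t - p₁ t * deriv p₂ t) / (p₂ t)^2 * y t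
          + p₁ t / p₂ t * deriv y t) t :=
      (((hp₁ t ht).hasDerivAt.div (hp₂ t ht).hasDerivAt (hp₂ne t ht)).mul
        (hy t ht).hasDerivAt)
    have h4 := hH t ht
    have hD := ((h1.add h2).add h3).sub h4
    have hc := hcond t ht
    have ho := hode t ht
    have hne := hp₂ne t ht
    have key : (deriv p₁ t * p₂ t - p₁ t * deriv p₂ t) / p₂ t ^ 2 = p₀ t / p₂ t := by
      rw [div_eq_div_iff (pow_ne_zero 2 hne) hne]
      linear_combination p₂ t * hc
    rw [key] at hD
    have hval : deriv (deriv (deriv y)) t + α * deriv (deriv y) t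
        + (p₀ t / p₂ t * y t + p₁ t / p₂ t * deriv y t) - h t / p₂ t = 0 := by
      field_simp
      linear_combination ho
    rw [hval] at hD
    exact hD
  rcases Set.eq_empty_or_nonempty (Set.Ioo a b) with he | ⟨t₀, ht₀⟩
  · exact ⟨0, fun t ht => by rw [he] at ht; exact absurd ht (Set.notMem_empty t)⟩
  · refine ⟨F t₀, fun t ht => ?_⟩
    have := const_on_Ioo hderiv ht ht₀
    simp only [hF] at this
    linarith
end

section
/- For C¹ functions F₀,...,F₃ : ℝ⁴ → ℝ, if the six exactness conditions hold on all of ℝ⁴ and additionally F₃ is nowhere zero, then any three-times-differentiable solution y of F₃y''' + F₂y'' + F₁y' + F₀ = 0 on an interval I satisfies a second-order implicit equation Ψ(t, y, y', y'') = c, where Ψ(t,y,p,q) = ∫_{0}^{t} F₀(ξ,y,p,q)dξ + ∫_{0}^{y} F₁(0,ξ,p,q)dξ + ∫_{0}^{p} F₂(0,0,ξ,q)dξ + ∫_{0}^{q} F₃(0,0,0,ξ)dξ and c is constant. -/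
/-- Partial derivative in the first coordinate `t`. -/
noncomputable def pdT (F : ℝ → ℝ → ℝ → ℝ → ℝ) (t y p q : ℝ) : ℝ := deriv (fun s => F s y p q) t
/-- Partial derivative in the second coordinate `y`. -/
noncomputable def pdY (F : ℝ → ℝ → ℝ → ℝ → ℝ) (t y p q : ℝ) : ℝ := deriv (fun s => F t s p q) y
/-- Partial derivative in the third coordinate `p`. -/
noncomputable def pdP (F : ℝ → ℝ → ℝ → ℝ → ℝ) (t y p q : ℝ) : ℝ := deriv (fun s => F t y s q) p
/-- Partial derivative in the fourth coordinate `q`. -/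
noncomputable def pdQ (F : ℝ → ℝ → ℝ → ℝ → ℝ) (t y p q : ℝ) : ℝ := deriv (fun s => F t y p s) q

/-- View a curried function of four real variables as a function on `ℝ⁴`. -/
def uncurry4 (F : ℝ → ℝ → ℝ → ℝ → ℝ) : ℝ × ℝ × ℝ × ℝ → ℝ := fun v => F v.1 v.2.1 v.2.2.1 v.2.2.2

/-!
`Ψ` is the potential of the closed form `ω = F₀ dt + F₁ dy + F₂ dp + F₃ dq` obtained by
integrating along coordinate segments. Differentiating under the integral sign and using the
six closedness conditions, `(Ψ ∘ γ)' = ω(γ')` along every differentiable curve `γ`. For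
`γ = (t, y, y', y'')` the right-hand side is the left-hand side of the ODE, so `Ψ ∘ γ` has zero
derivative on the interval and is constant there.
-/

open Set Filter MeasureTheory ContinuousLinearMap

section LineIntegral

variable {V G : Type*} [NormedAddCommGroup V] [NormedSpace ℝ V]
  [NormedAddCommGroup G] [NormedSpace ℝ G] {f : V → G}

theorem hasFDerivAt_integral_comp_add_smul (hf : ContDiff ℝ 1 f) (v : V) (s : ℝ) (a : V) :
    HasFDerivAt (fun a => ∫ ξ in (0:ℝ)..s, f (a + ξ • v))
      (∫ ξ in (0:ℝ)..s, fderiv ℝ f (a + ξ • v)) a := by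
  have hDf : Continuous fun p : ℝ × V => fderiv ℝ f (p.2 + p.1 • v) :=
    (hf.continuous_fderiv one_ne_zero).comp (by fun_prop)
  have hDf_line : Continuous fun ξ : ℝ => fderiv ℝ f (a + ξ • v) :=
    hDf.comp (continuous_id.prodMk continuous_const)
  obtain ⟨M, hM⟩ : ∃ M, ∀ ξ ∈ uIcc 0 s, ‖fderiv ℝ f (a + ξ • v)‖ ≤ M :=
    isCompact_uIcc.exists_bound_of_continuousOn hDf_line.continuousOn
  -- the bound on the compact segment persists, up to `1`, on a tube around it
  obtain ⟨I, U, -, hU, hI, haU, hIU⟩ := generalized_tube_lemma isCompact_uIcc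
    isCompact_singleton (isOpen_lt hDf.norm continuous_const)
    (show uIcc 0 s ×ˢ {a} ⊆ {p | ‖fderiv ℝ f (p.2 + p.1 • v)‖ < M + 1} by
      rintro ⟨ξ, b⟩ ⟨hξ, rfl⟩
      exact (hM ξ hξ).trans_lt (lt_add_one M))
  have hf_line : ∀ b, Continuous fun ξ : ℝ => f (b + ξ • v) := fun b =>
    hf.continuous.comp (by fun_prop)
  refine intervalIntegral.hasFDerivAt_integral_of_dominated_of_fderiv_le
    (F' := fun b ξ => fderiv ℝ f (b + ξ • v)) (bound := fun _ => M + 1) (hU.mem_nhds (haU rfl))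
    ?_ ?_ ?_ ?_ ?_ ?_
  · exact Eventually.of_forall fun b => (hf_line b).aestronglyMeasurable
  · exact (hf_line a).intervalIntegrable 0 s
  · exact hDf_line.aestronglyMeasurable
  · refine ae_of_all _ fun ξ hξ b hb => ?_
    have hlt : ‖fderiv ℝ f (b + ξ • v)‖ < M + 1 :=
      hIU (mk_mem_prod (hI (uIoc_subset_uIcc hξ)) hb)
    exact hlt.le
  · exact intervalIntegrable_const
  · refine ae_of_all _ fun ξ _ b _ => ?_
    exact (hf.differentiable one_ne_zero _).hasFDerivAt.comp b ((hasFDerivAt_id b).add_const _)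

theorem hasFDerivAt_integral_comp_add_smul_prod [CompleteSpace G] (hf : ContDiff ℝ 1 f) (v : V)
    (x : ℝ × V) :
    HasFDerivAt (fun x : ℝ × V => ∫ ξ in (0:ℝ)..x.1, f (x.2 + ξ • v))
      ((toSpanSingleton ℝ (f (x.2 + x.1 • v))).coprod
        (∫ ξ in (0:ℝ)..x.1, fderiv ℝ f (x.2 + ξ • v))) x := by
  have hf_cont : Continuous fun p : ℝ × V => f (p.2 + p.1 • v) := hf.continuous.comp (by fun_prop)
  have hDf : Continuous fun p : V × ℝ => fderiv ℝ f (p.1 + p.2 • v) :=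
    (hf.continuous_fderiv one_ne_zero).comp (by fun_prop)
  refine (hasStrictFDerivAt_uncurry_coprod (f := fun s a => ∫ ξ in (0:ℝ)..s, f (a + ξ • v))
    (f₁ := fun s a => toSpanSingleton ℝ (f (a + s • v)))
    (f₂ := fun s a => ∫ ξ in (0:ℝ)..s, fderiv ℝ f (a + ξ • v)) ?_ ?_ ?_ ?_).hasFDerivAt
  · refine Eventually.of_forall fun p => ?_
    exact (hf_cont.comp (continuous_id.prodMk continuous_const)).integral_hasStrictDerivAt
      0 p.1 |>.hasDerivAt.hasFDerivAt
  · exact Eventually.of_forall fun p => hasFDerivAt_integral_comp_add_smul hf v p.1 p.2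
  · exact ((toSpanSingletonCLE (𝕜 := ℝ)).continuous.comp hf_cont).continuousAt
  · exact ((intervalIntegral.continuous_parametric_primitive_of_continuous
      (f := fun a ξ => fderiv ℝ f (a + ξ • v)) (a₀ := 0) hDf).comp continuous_swap).continuousAt

theorem HasDerivAt.integral_comp_add_smul [CompleteSpace G] (hf : ContDiff ℝ 1 f) (v : V)
    {s : ℝ → ℝ} {a : ℝ → V} {s' : ℝ} {a' : V} {t : ℝ} (hs : HasDerivAt s s' t)
    (ha : HasDerivAt a a' t) :
    HasDerivAt (fun t => ∫ ξ in (0:ℝ)..s t, f (a t + ξ • v))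
      (s' • f (a t + s t • v) + ∫ ξ in (0:ℝ)..s t, fderiv ℝ f (a t + ξ • v) a') t := by
  have hDf : Continuous fun ξ : ℝ => fderiv ℝ f (a t + ξ • v) :=
    (hf.continuous_fderiv one_ne_zero).comp (by fun_prop)
  refine ((hasFDerivAt_integral_comp_add_smul_prod hf v (s t, a t)).comp_hasDerivAt t
    (hs.prodMk ha)).congr_deriv ?_
  rw [coprod_apply, toSpanSingleton_apply,
    ContinuousLinearMap.intervalIntegral_apply (hDf.intervalIntegrable _ _)]

theorem integral_fderiv_comp_add_smul_apply [CompleteSpace G] {g : V → G} {g' : V → V →L[ℝ] G}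
    (hf : ContDiff ℝ 1 f) (hg : ∀ z, HasFDerivAt g (g' z) z) {v w : V}
    (hfg : ∀ z, fderiv ℝ f z w = g' z v) (a : V) (s : ℝ) :
    ∫ ξ in (0:ℝ)..s, fderiv ℝ f (a + ξ • v) w = g (a + s • v) - g a := by
  have hDf : Continuous fun ξ : ℝ => fderiv ℝ f (a + ξ • v) w :=
    ((hf.continuous_fderiv one_ne_zero).comp (by fun_prop)).clm_apply continuous_const
  rw [intervalIntegral.integral_eq_sub_of_hasDerivAt (f := fun ξ => g (a + ξ • v))
    (fun ξ _ => ?_) (hDf.intervalIntegrable _ _), zero_smul, add_zero]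
  have hline : HasDerivAt (fun ξ : ℝ => a + ξ • v) v ξ := by
    simpa using ((hasDerivAt_id ξ).smul_const v).const_add a
  rw [hfg]
  exact (hg _).comp_hasDerivAt ξ hline

theorem HasDerivAt.integral_comp_add_smul_of_fderiv_apply_eq [CompleteSpace G] {g : V → G}
    {g' : V → V →L[ℝ] G} (hf : ContDiff ℝ 1 f) (hg : ∀ z, HasFDerivAt g (g' z) z) {v : V}
    {s : ℝ → ℝ} {a : ℝ → V} {s' : ℝ} {a' : V} {t : ℝ} (hfg : ∀ z, fderiv ℝ f z a' = g' z v)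
    (hs : HasDerivAt s s' t) (ha : HasDerivAt a a' t) :
    HasDerivAt (fun t => ∫ ξ in (0:ℝ)..s t, f (a t + ξ • v))
      (s' • f (a t + s t • v) + (g (a t + s t • v) - g (a t))) t := by
  rw [← integral_fderiv_comp_add_smul_apply hf hg hfg]
  exact hs.integral_comp_add_smul hf v ha

end LineIntegral

section FourVariables

variable {F : ℝ → ℝ → ℝ → ℝ → ℝ} {t y p q : ℝ}

theorem pdT_eq_fderiv (hF : DifferentiableAt ℝ (uncurry4 F) (t, y, p, q)) :
    pdT F t y p q = fderiv ℝ (uncurry4 F) (t, y, p, q) (1, 0, 0, 0) := by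
  have hline : HasDerivAt (fun s => ((s, y, p, q) : ℝ × ℝ × ℝ × ℝ)) (1, 0, 0, 0) t :=
    (hasDerivAt_id' t).prodMk ((hasDerivAt_const t y).prodMk
      ((hasDerivAt_const t p).prodMk (hasDerivAt_const t q)))
  exact (hF.hasFDerivAt.comp_hasDerivAt t hline).deriv

theorem pdY_eq_fderiv (hF : DifferentiableAt ℝ (uncurry4 F) (t, y, p, q)) :
    pdY F t y p q = fderiv ℝ (uncurry4 F) (t, y, p, q) (0, 1, 0, 0) := by
  have hline : HasDerivAt (fun s => ((t, s, p, q) : ℝ × ℝ × ℝ × ℝ)) (0, 1, 0, 0) y :=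
    (hasDerivAt_const y t).prodMk ((hasDerivAt_id' y).prodMk
      ((hasDerivAt_const y p).prodMk (hasDerivAt_const y q)))
  exact (hF.hasFDerivAt.comp_hasDerivAt y hline).deriv

theorem pdP_eq_fderiv (hF : DifferentiableAt ℝ (uncurry4 F) (t, y, p, q)) :
    pdP F t y p q = fderiv ℝ (uncurry4 F) (t, y, p, q) (0, 0, 1, 0) := by
  have hline : HasDerivAt (fun s => ((t, y, s, q) : ℝ × ℝ × ℝ × ℝ)) (0, 0, 1, 0) p :=
    (hasDerivAt_const p t).prodMk ((hasDerivAt_const p y).prodMk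
      ((hasDerivAt_id' p).prodMk (hasDerivAt_const p q)))
  exact (hF.hasFDerivAt.comp_hasDerivAt p hline).deriv

theorem pdQ_eq_fderiv (hF : DifferentiableAt ℝ (uncurry4 F) (t, y, p, q)) :
    pdQ F t y p q = fderiv ℝ (uncurry4 F) (t, y, p, q) (0, 0, 0, 1) := by
  have hline : HasDerivAt (fun s => ((t, y, p, s) : ℝ × ℝ × ℝ × ℝ)) (0, 0, 0, 1) q :=
    (hasDerivAt_const q t).prodMk ((hasDerivAt_const q y).prodMk
      ((hasDerivAt_const q p).prodMk (hasDerivAt_id' q)))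
  exact (hF.hasFDerivAt.comp_hasDerivAt q hline).deriv

theorem fderiv_uncurry4_apply (hF : DifferentiableAt ℝ (uncurry4 F) (t, y, p, q))
    (dt dy dp dq : ℝ) :
    fderiv ℝ (uncurry4 F) (t, y, p, q) (dt, dy, dp, dq) =
      dt * pdT F t y p q + dy * pdY F t y p q + dp * pdP F t y p q + dq * pdQ F t y p q := by
  have hdecomp : ((dt, dy, dp, dq) : ℝ × ℝ × ℝ × ℝ) =
      dt • (1, 0, 0, 0) + dy • (0, 1, 0, 0) + dp • (0, 0, 1, 0) + dq • (0, 0, 0, 1) := by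
    simp
  rw [hdecomp, pdT_eq_fderiv hF, pdY_eq_fderiv hF, pdP_eq_fderiv hF, pdQ_eq_fderiv hF]
  simp only [map_add, map_smul, smul_eq_mul]

variable {F₀ F₁ F₂ F₃ : ℝ → ℝ → ℝ → ℝ → ℝ}

theorem fderiv_uncurry4_transverse_t (hF₀ : DifferentiableAt ℝ (uncurry4 F₀) (t, y, p, q))
    (hF₁ : DifferentiableAt ℝ (uncurry4 F₁) (t, y, p, q))
    (hF₂ : DifferentiableAt ℝ (uncurry4 F₂) (t, y, p, q))
    (hF₃ : DifferentiableAt ℝ (uncurry4 F₃) (t, y, p, q))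
    (h₁ : pdQ F₀ t y p q = pdT F₃ t y p q) (h₄ : pdP F₀ t y p q = pdT F₂ t y p q)
    (h₆ : pdY F₀ t y p q = pdT F₁ t y p q) (dy dp dq : ℝ) :
    fderiv ℝ (uncurry4 F₀) (t, y, p, q) (0, dy, dp, dq) =
      (dy • fderiv ℝ (uncurry4 F₁) (t, y, p, q) + dp • fderiv ℝ (uncurry4 F₂) (t, y, p, q)
        + dq • fderiv ℝ (uncurry4 F₃) (t, y, p, q)) (1, 0, 0, 0) := by
  simp only [add_apply, smul_apply, smul_eq_mul, fderiv_uncurry4_apply hF₀,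
    fderiv_uncurry4_apply hF₁, fderiv_uncurry4_apply hF₂, fderiv_uncurry4_apply hF₃, h₁, h₄, h₆]
  ring

theorem fderiv_uncurry4_transverse_y (hF₁ : DifferentiableAt ℝ (uncurry4 F₁) (t, y, p, q))
    (hF₂ : DifferentiableAt ℝ (uncurry4 F₂) (t, y, p, q))
    (hF₃ : DifferentiableAt ℝ (uncurry4 F₃) (t, y, p, q))
    (h₂ : pdQ F₁ t y p q = pdY F₃ t y p q) (h₅ : pdP F₁ t y p q = pdY F₂ t y p q) (dp dq : ℝ) :
    fderiv ℝ (uncurry4 F₁) (t, y, p, q) (0, 0, dp, dq) =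
      (dp • fderiv ℝ (uncurry4 F₂) (t, y, p, q)
        + dq • fderiv ℝ (uncurry4 F₃) (t, y, p, q)) (0, 1, 0, 0) := by
  simp only [add_apply, smul_apply, smul_eq_mul, fderiv_uncurry4_apply hF₁,
    fderiv_uncurry4_apply hF₂, fderiv_uncurry4_apply hF₃, h₂, h₅]
  ring

theorem fderiv_uncurry4_transverse_p (hF₂ : DifferentiableAt ℝ (uncurry4 F₂) (t, y, p, q))
    (hF₃ : DifferentiableAt ℝ (uncurry4 F₃) (t, y, p, q))
    (h₃ : pdQ F₂ t y p q = pdP F₃ t y p q) (dq : ℝ) :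
    fderiv ℝ (uncurry4 F₂) (t, y, p, q) (0, 0, 0, dq) =
      (dq • fderiv ℝ (uncurry4 F₃) (t, y, p, q)) (0, 0, 1, 0) := by
  simp only [smul_apply, smul_eq_mul, fderiv_uncurry4_apply hF₂, fderiv_uncurry4_apply hF₃, h₃]
  ring

end FourVariables

noncomputable def potential (F₀ F₁ F₂ F₃ : ℝ → ℝ → ℝ → ℝ → ℝ) (t y p q : ℝ) : ℝ :=
  (∫ ξ in (0:ℝ)..t, F₀ ξ y p q) + (∫ ξ in (0:ℝ)..y, F₁ 0 ξ p q)
    + (∫ ξ in (0:ℝ)..p, F₂ 0 0 ξ q) + (∫ ξ in (0:ℝ)..q, F₃ 0 0 0 ξ)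

theorem hasDerivAt_potential_comp {F₀ F₁ F₂ F₃ : ℝ → ℝ → ℝ → ℝ → ℝ}
    (hF₀ : ContDiff ℝ 1 (uncurry4 F₀)) (hF₁ : ContDiff ℝ 1 (uncurry4 F₁))
    (hF₂ : ContDiff ℝ 1 (uncurry4 F₂)) (hF₃ : ContDiff ℝ 1 (uncurry4 F₃))
    (h₁ : ∀ t y p q, pdQ F₀ t y p q = pdT F₃ t y p q)
    (h₂ : ∀ t y p q, pdQ F₁ t y p q = pdY F₃ t y p q)
    (h₃ : ∀ t y p q, pdQ F₂ t y p q = pdP F₃ t y p q)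
    (h₄ : ∀ t y p q, pdP F₀ t y p q = pdT F₂ t y p q)
    (h₅ : ∀ t y p q, pdP F₁ t y p q = pdY F₂ t y p q)
    (h₆ : ∀ t y p q, pdY F₀ t y p q = pdT F₁ t y p q)
    {T Y P Q : ℝ → ℝ} {T' Y' P' Q' t : ℝ} (hT : HasDerivAt T T' t) (hY : HasDerivAt Y Y' t)
    (hP : HasDerivAt P P' t) (hQ : HasDerivAt Q Q' t) :
    HasDerivAt (fun t => potential F₀ F₁ F₂ F₃ (T t) (Y t) (P t) (Q t))
      (T' * F₀ (T t) (Y t) (P t) (Q t) + Y' * F₁ (T t) (Y t) (P t) (Q t)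
        + P' * F₂ (T t) (Y t) (P t) (Q t) + Q' * F₃ (T t) (Y t) (P t) (Q t)) t := by
  have hdiff : ∀ {F}, ContDiff ℝ 1 (uncurry4 F) → ∀ x, DifferentiableAt ℝ (uncurry4 F) x :=
    fun hF x => hF.differentiable one_ne_zero x
  have hfderiv : ∀ {F}, ContDiff ℝ 1 (uncurry4 F) → ∀ x, HasFDerivAt (uncurry4 F)
      (fderiv ℝ (uncurry4 F) x) x := fun hF x => (hdiff hF x).hasFDerivAt
  -- closedness turns the transversal derivative of each integrand into a derivative along
  -- its integration line, which integrates by the fundamental theorem of calculus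
  have hclosed₀ : ∀ z, fderiv ℝ (uncurry4 F₀) z (0, Y', P', Q') =
      (Y' • fderiv ℝ (uncurry4 F₁) z + P' • fderiv ℝ (uncurry4 F₂) z
        + Q' • fderiv ℝ (uncurry4 F₃) z) (1, 0, 0, 0) := fun ⟨t, y, p, q⟩ =>
    fderiv_uncurry4_transverse_t (hdiff hF₀ _) (hdiff hF₁ _) (hdiff hF₂ _) (hdiff hF₃ _)
      (h₁ t y p q) (h₄ t y p q) (h₆ t y p q) Y' P' Q'
  have hclosed₁ : ∀ z, fderiv ℝ (uncurry4 F₁) z (0, 0, P', Q') =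
      (P' • fderiv ℝ (uncurry4 F₂) z + Q' • fderiv ℝ (uncurry4 F₃) z) (0, 1, 0, 0) :=
    fun ⟨t, y, p, q⟩ => fderiv_uncurry4_transverse_y (hdiff hF₁ _) (hdiff hF₂ _)
      (hdiff hF₃ _) (h₂ t y p q) (h₅ t y p q) P' Q'
  have hclosed₂ : ∀ z, fderiv ℝ (uncurry4 F₂) z (0, 0, 0, Q') =
      (Q' • fderiv ℝ (uncurry4 F₃) z) (0, 0, 1, 0) := fun ⟨t, y, p, q⟩ =>
    fderiv_uncurry4_transverse_p (hdiff hF₂ _) (hdiff hF₃ _) (h₃ t y p q) Q'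
  have hclosed₃ : ∀ z, fderiv ℝ (uncurry4 F₃) z (0, 0, 0, 0) =
      (0 : ℝ × ℝ × ℝ × ℝ →L[ℝ] ℝ) (0, 0, 0, 1) :=
    fun z => (map_zero (fderiv ℝ (uncurry4 F₃) z)).trans (zero_apply _).symm
  have h0 : HasDerivAt (fun _ : ℝ => (0 : ℝ)) 0 t := hasDerivAt_const t 0
  have hI₀ := HasDerivAt.integral_comp_add_smul_of_fderiv_apply_eq
    (g := fun z => Y' * uncurry4 F₁ z + P' * uncurry4 F₂ z + Q' * uncurry4 F₃ z) hF₀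
    (fun z => (((hfderiv hF₁ z).const_mul Y').add ((hfderiv hF₂ z).const_mul P')).add
      ((hfderiv hF₃ z).const_mul Q')) hclosed₀ hT (h0.prodMk (hY.prodMk (hP.prodMk hQ)))
  have hI₁ := HasDerivAt.integral_comp_add_smul_of_fderiv_apply_eq
    (g := fun z => P' * uncurry4 F₂ z + Q' * uncurry4 F₃ z) hF₁
    (fun z => ((hfderiv hF₂ z).const_mul P').add ((hfderiv hF₃ z).const_mul Q')) hclosed₁ hY
    (h0.prodMk (h0.prodMk (hP.prodMk hQ)))
  have hI₂ := HasDerivAt.integral_comp_add_smul_of_fderiv_apply_eq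
    (g := fun z => Q' * uncurry4 F₃ z) hF₂ (fun z => (hfderiv hF₃ z).const_mul Q') hclosed₂ hP
    (h0.prodMk (h0.prodMk (h0.prodMk hQ)))
  have hI₃ := HasDerivAt.integral_comp_add_smul_of_fderiv_apply_eq
    (g := fun _ => (0 : ℝ)) hF₃ (fun z => hasFDerivAt_const 0 z) hclosed₃ hQ
    (h0.prodMk (h0.prodMk (h0.prodMk h0)))
  simp only [uncurry4, Prod.smul_mk, Prod.mk_add_mk, smul_eq_mul, mul_one, mul_zero, zero_add,
    add_zero, sub_zero] at hI₀ hI₁ hI₂ hI₃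
  exact (((hI₀.add hI₁).add hI₂).add hI₃).congr_deriv (by ring)

theorem stmt_17_general (F₀ F₁ F₂ F₃ : ℝ → ℝ → ℝ → ℝ → ℝ) (y : ℝ → ℝ) (a b : ℝ)
    (hF₀ : ContDiff ℝ 1 (uncurry4 F₀)) (hF₁ : ContDiff ℝ 1 (uncurry4 F₁))
    (hF₂ : ContDiff ℝ 1 (uncurry4 F₂)) (hF₃ : ContDiff ℝ 1 (uncurry4 F₃))
    (h₁ : ∀ t y p q, pdQ F₀ t y p q = pdT F₃ t y p q)
    (h₂ : ∀ t y p q, pdQ F₁ t y p q = pdY F₃ t y p q)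
    (h₃ : ∀ t y p q, pdQ F₂ t y p q = pdP F₃ t y p q)
    (h₄ : ∀ t y p q, pdP F₀ t y p q = pdT F₂ t y p q)
    (h₅ : ∀ t y p q, pdP F₁ t y p q = pdY F₂ t y p q)
    (h₆ : ∀ t y p q, pdY F₀ t y p q = pdT F₁ t y p q)
    (hy : ∀ t ∈ Set.Ioo a b, DifferentiableAt ℝ y t)
    (hy' : ∀ t ∈ Set.Ioo a b, DifferentiableAt ℝ (deriv y) t)
    (hy'' : ∀ t ∈ Set.Ioo a b, DifferentiableAt ℝ (deriv (deriv y)) t)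
    (hode : ∀ t ∈ Set.Ioo a b,
      F₃ t (y t) (deriv y t) (deriv (deriv y) t) * deriv (deriv (deriv y)) t
        + F₂ t (y t) (deriv y t) (deriv (deriv y) t) * deriv (deriv y) t
        + F₁ t (y t) (deriv y t) (deriv (deriv y) t) * deriv y t
        + F₀ t (y t) (deriv y t) (deriv (deriv y) t) = 0)
    (Ψ : ℝ → ℝ → ℝ → ℝ → ℝ)
    (hΨ : ∀ t y p q, Ψ t y p q =
      (∫ ξ in (0:ℝ)..t, F₀ ξ y p q) + (∫ ξ in (0:ℝ)..y, F₁ 0 ξ p q)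
        + (∫ ξ in (0:ℝ)..p, F₂ 0 0 ξ q) + (∫ ξ in (0:ℝ)..q, F₃ 0 0 0 ξ)) :
    ∃ c : ℝ, ∀ t ∈ Set.Ioo a b,
      Ψ t (y t) (deriv y t) (deriv (deriv y) t) = c := by
  obtain rfl : Ψ = potential F₀ F₁ F₂ F₃ := by
    funext t y p q
    exact hΨ t y p q
  have hderiv : ∀ t ∈ Ioo a b, HasDerivAt
      (fun t => potential F₀ F₁ F₂ F₃ t (y t) (deriv y t) (deriv (deriv y) t)) 0 t := by
    intro t ht
    refine (hasDerivAt_potential_comp hF₀ hF₁ hF₂ hF₃ h₁ h₂ h₃ h₄ h₅ h₆ (hasDerivAt_id' t)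
      (hy t ht).hasDerivAt (hy' t ht).hasDerivAt (hy'' t ht).hasDerivAt).congr_deriv ?_
    linear_combination hode t ht
  exact isOpen_Ioo.exists_is_const_of_deriv_eq_zero isPreconnected_Ioo
    (fun t ht => (hderiv t ht).differentiableAt.differentiableWithinAt)
    (fun t ht => (hderiv t ht).deriv)

theorem stmt_17 (F₀ F₁ F₂ F₃ : ℝ → ℝ → ℝ → ℝ → ℝ) (y : ℝ → ℝ) (a b : ℝ)
    (hF₀ : ContDiff ℝ 1 (uncurry4 F₀)) (hF₁ : ContDiff ℝ 1 (uncurry4 F₁))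
    (hF₂ : ContDiff ℝ 1 (uncurry4 F₂)) (hF₃ : ContDiff ℝ 1 (uncurry4 F₃))
    (h₁ : ∀ t y p q, pdQ F₀ t y p q = pdT F₃ t y p q)
    (h₂ : ∀ t y p q, pdQ F₁ t y p q = pdY F₃ t y p q)
    (h₃ : ∀ t y p q, pdQ F₂ t y p q = pdP F₃ t y p q)
    (h₄ : ∀ t y p q, pdP F₀ t y p q = pdT F₂ t y p q)
    (h₅ : ∀ t y p q, pdP F₁ t y p q = pdY F₂ t y p q)
    (h₆ : ∀ t y p q, pdY F₀ t y p q = pdT F₁ t y p q)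
    (hF₃ne : ∀ t y p q, F₃ t y p q ≠ 0)
    (hy : ∀ t ∈ Set.Ioo a b, DifferentiableAt ℝ y t)
    (hy' : ∀ t ∈ Set.Ioo a b, DifferentiableAt ℝ (deriv y) t)
    (hy'' : ∀ t ∈ Set.Ioo a b, DifferentiableAt ℝ (deriv (deriv y)) t)
    (hode : ∀ t ∈ Set.Ioo a b,
      F₃ t (y t) (deriv y t) (deriv (deriv y) t) * deriv (deriv (deriv y)) t
        + F₂ t (y t) (deriv y t) (deriv (deriv y) t) * deriv (deriv y) t
        + F₁ t (y t) (deriv y t) (deriv (deriv y) t) * deriv y t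
        + F₀ t (y t) (deriv y t) (deriv (deriv y) t) = 0)
    (Ψ : ℝ → ℝ → ℝ → ℝ → ℝ)
    (hΨ : ∀ t y p q, Ψ t y p q =
      (∫ ξ in (0:ℝ)..t, F₀ ξ y p q) + (∫ ξ in (0:ℝ)..y, F₁ 0 ξ p q)
        + (∫ ξ in (0:ℝ)..p, F₂ 0 0 ξ q) + (∫ ξ in (0:ℝ)..q, F₃ 0 0 0 ξ)) :
    ∃ c : ℝ, ∀ t ∈ Set.Ioo a b,
      Ψ t (y t) (deriv y t) (deriv (deriv y) t) = c :=
  stmt_17_general F₀ F₁ F₂ F₃ y a b hF₀ hF₁ hF₂ hF₃ h₁ h₂ h₃ h₄ h₅ h₆ hy hy' hy'' hode Ψ hΨ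
end
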